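/- For any wheel graph W_n of order n ≥ 5, γ_tc(M(W_n)) = ⌈2n/3⌉. -/

import Mathlib

open SimpleGraph

/-- The middle graph `M(G)`: vertices are `V(G) ⊕ E(G)`; an edge-vertex is adjacent to
another edge-vertex iff the edges are distinct and share an endpoint, and a vertex is
adjacent to an edge iff it is incident to it. -/
def middleGraph {V : Type*} (G : SimpleGraph V) : SimpleGraph (V ⊕ G.edgeSet) where
  Adj x y :=
    match x, y with
    | Sum.inl _, Sum.inl _ => False
    | Sum.inl v, Sum.inr e => v ∈ (e : Sym2 V)
    | Sum.inr e, Sum.inl v => v ∈ (e : Sym2 V)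
    | Sum.inr e, Sum.inr f => e ≠ f ∧ ∃ v, v ∈ (e : Sym2 V) ∧ v ∈ (f : Sym2 V)
  symm := by
    refine ⟨?_⟩
    rintro (v|e) (w|f) h
    · exact h
    · exact h
    · exact h
    · exact ⟨h.1.symm, h.2.imp fun v hv => ⟨hv.2, hv.1⟩⟩
  loopless := by
    refine ⟨?_⟩
    rintro (v|e) h
    · exact h
    · exact h.1 rfl

/-- `D` is a total dominating set of `G`: every vertex has a neighbour in `D`. -/
def IsTotalDomSet {V : Type*} (G : SimpleGraph V) (D : Set V) : Prop :=
  ∀ v : V, ∃ u ∈ D, G.Adj v u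

/-- `D` is a total outer-connected dominating set of `G`: it is total dominating and
the subgraph induced on the complement of `D` is connected. -/
def IsTOCDomSet {V : Type*} (G : SimpleGraph V) (D : Set V) : Prop :=
  IsTotalDomSet G D ∧ (G.induce Dᶜ).Connected

/-- The total domination number `γₜ(G)`. -/
noncomputable def totalDomNum {V : Type*} (G : SimpleGraph V) : ℕ :=
  sInf {k | ∃ D : Set V, IsTotalDomSet G D ∧ D.ncard = k}

/-- The total outer-connected domination number `γ_tc(G)`. -/
noncomputable def tocDomNum {V : Type*} (G : SimpleGraph V) : ℕ :=
  sInf {k | ∃ D : Set V, IsTOCDomSet G D ∧ D.ncard = k}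

/-- The set of leaves (vertices of degree 1) of `G`. -/
def leafSet {V : Type*} (G : SimpleGraph V) : Set V :=
  {v | ∃ u, G.neighborSet v = {u}}

/-- The wheel graph with hub `none` and rim cycle on `Fin n`. -/
def wheelGraph (n : ℕ) : SimpleGraph (Option (Fin n)) where
  Adj x y :=
    match x, y with
    | none, none => False
    | none, some _ => True
    | some _, none => True
    | some i, some j => (SimpleGraph.cycleGraph n).Adj i j
  symm := by
    refine ⟨?_⟩
    rintro (_|i) (_|j) h
    · exact h
    · exact h
    · exact h
    · exact (SimpleGraph.cycleGraph n).adj_symm h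
  loopless := by
    refine ⟨?_⟩
    rintro (_|i) h
    · exact h
    · exact (SimpleGraph.cycleGraph n).loopless.irrefl i h

/-- The corona `G ∘ K₁`: to each vertex `a` of `G` (copy `Sum.inl a`) a pendant
vertex `Sum.inr a` is attached. -/
def corona {V : Type*} (G : SimpleGraph V) : SimpleGraph (V ⊕ V) where
  Adj x y :=
    match x, y with
    | Sum.inl a, Sum.inl b => G.Adj a b
    | Sum.inl a, Sum.inr b => a = b
    | Sum.inr a, Sum.inl b => a = b
    | Sum.inr _, Sum.inr _ => False
  symm := by
    refine ⟨?_⟩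
    rintro (a|a) (b|b) h
    · exact G.adj_symm h
    · exact h.symm
    · exact h.symm
    · exact h
  loopless := by
    refine ⟨?_⟩
    rintro (a|a) h
    · exact G.loopless.irrefl a h
    · exact h

/-- The 2-corona `G ∘ P₂`: to each vertex `a` of `G` (copy `Sum.inl a`) a path
`Sum.inl a — Sum.inr (Sum.inl a) — Sum.inr (Sum.inr a)` of length 2 is attached. -/
def corona2 {V : Type*} (G : SimpleGraph V) : SimpleGraph (V ⊕ V ⊕ V) where
  Adj x y :=
    match x, y with
    | Sum.inl a, Sum.inl b => G.Adj a b
    | Sum.inl a, Sum.inr (Sum.inl b) => a = b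
    | Sum.inr (Sum.inl a), Sum.inl b => a = b
    | Sum.inr (Sum.inl a), Sum.inr (Sum.inr b) => a = b
    | Sum.inr (Sum.inr a), Sum.inr (Sum.inl b) => a = b
    | _, _ => False
  symm := by
    refine ⟨?_⟩
    rintro (a|a|a) (b|b|b) h <;> first | exact G.symm h | exact h.symm | exact h
  loopless := by
    refine ⟨?_⟩
    rintro (a|a|a) h
    · exact G.loopless.irrefl a h
    · exact h
    · exact h

/-- The spider `S_{1,n,n}`: hub `none`, middle vertices `some (.inl i)`,
leaves `some (.inr i)`; the star `K_{1,n}` with every edge subdivided once. -/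
def spiderGraph (n : ℕ) : SimpleGraph (Option (Fin n ⊕ Fin n)) where
  Adj x y :=
    match x, y with
    | none, some (Sum.inl _) => True
    | some (Sum.inl _), none => True
    | some (Sum.inl i), some (Sum.inr j) => i = j
    | some (Sum.inr i), some (Sum.inl j) => i = j
    | _, _ => False
  symm := by
    refine ⟨?_⟩
    rintro (_|i|i) (_|j|j) h <;> first | exact h.symm | exact h
  loopless := by
    refine ⟨?_⟩
    rintro (_|i|i) h <;> exact h

/-- The friendship graph `Fₙ`: `n` triangles sharing the common vertex `none`. -/
def friendshipGraph (n : ℕ) : SimpleGraph (Option (Fin n × Fin 2)) where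
  Adj x y :=
    match x, y with
    | none, some _ => True
    | some _, none => True
    | some (i, a), some (j, b) => i = j ∧ a ≠ b
    | none, none => False
  symm := by
    refine ⟨?_⟩
    rintro (_|⟨i,a⟩) (_|⟨j,b⟩) h <;> first | exact ⟨h.1.symm, h.2.symm⟩ | exact h
  loopless := by
    refine ⟨?_⟩
    rintro (_|⟨i,a⟩) h
    · exact h
    · exact h.2 rfl


/-!
Let `N = n - 1` be the length of the rim and, for `D ⊆ V(M(Wₙ))`, let `x_k`, `s_k`, `u_k`, `h`
be the indicators of the `k`-th rim edge, the `k`-th spoke, the `k`-th rim vertex and the hub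
in `D`. If `D` is total dominating, the neighbourhoods of the rim vertices `k + 1`, `k + 2` and
of the rim edge `k + 1` force every window
`x_k + x_{k+1} + x_{k+2} + s_{k+1} + s_{k+2} + u_{k+1} + u_{k+2}` to weigh at least `2`.
Each `x` lies in three windows and each `s`, `u` in two, so the sums `X`, `S`, `U` satisfy
`3X + 2S + 2U ≥ 2N`, whence `3|D| ≥ 2N + (S + U + 3h)`. The hub needs a spoke, so `S ≥ 1`; in the only case where
`S + U + 3h < 2` (one spoke, no hub, no rim vertex) the dominator of that spoke is a rim edge
and produces a window of weight `3`. Hence `3|D| ≥ 2N + 2`, i.e. `|D| ≥ ⌈2n/3⌉`.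

Conversely, the spoke `1` together with the rim edges `k ≢ 1 (mod 3)` has exactly `⌈2n/3⌉`
elements, dominates totally, and leaves every other vertex joined to the hub through a spoke
other than `1`.
-/

section middleGraph

variable {V : Type*} {G : SimpleGraph V}

@[simp]
lemma middleGraph_adj_inl_inl {v w : V} : ¬(middleGraph G).Adj (.inl v) (.inl w) := id

@[simp]
lemma middleGraph_adj_inl_inr {v : V} {e : G.edgeSet} :
    (middleGraph G).Adj (.inl v) (.inr e) ↔ v ∈ (e : Sym2 V) := Iff.rfl

@[simp]
lemma middleGraph_adj_inr_inl {e : G.edgeSet} {v : V} :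
    (middleGraph G).Adj (.inr e) (.inl v) ↔ v ∈ (e : Sym2 V) := Iff.rfl

@[simp]
lemma middleGraph_adj_inr_inr {e f : G.edgeSet} :
    (middleGraph G).Adj (.inr e) (.inr f) ↔ e ≠ f ∧ ∃ v, v ∈ (e : Sym2 V) ∧ v ∈ (f : Sym2 V) :=
  Iff.rfl

end middleGraph

lemma tocDomNum_eq_of_isTOCDomSet {V : Type*} {G : SimpleGraph V} {D : Set V} {k : ℕ}
    (hD : IsTOCDomSet G D) (hcard : D.ncard = k)
    (hmin : ∀ D' : Set V, IsTOCDomSet G D' → k ≤ D'.ncard) : tocDomNum G = k :=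
  le_antisymm (Nat.sInf_le ⟨D, hD, hcard⟩) <|
    le_csInf ⟨k, D, hD, hcard⟩ fun _ ⟨D', hD', hD'card⟩ => hD'card ▸ hmin D' hD'

lemma Set.sum_indicator_comp_le_ncard {α β : Type*} [Fintype α] {f : α → β} (hf : f.Injective)
    {D : Set β} (hD : D.Finite) : ∑ a, D.indicator (1 : β → ℕ) (f a) ≤ D.ncard := by
  classical
  calc ∑ a, D.indicator (1 : β → ℕ) (f a) = (f ⁻¹' D).ncard := by
        simp [Set.indicator_apply, Finset.sum_boole, Set.ncard_eq_toFinset_card']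
    _ ≤ D.ncard := Set.ncard_le_ncard_of_injOn f (fun _ h => h) hf.injOn hD

lemma Fintype.sum_comp_add_right {G M : Type*} [AddGroup G] [Fintype G] [AddCommMonoid M]
    (f : G → M) (c : G) : ∑ i, f (i + c) = ∑ i, f i :=
  Fintype.sum_equiv (Equiv.addRight c) _ _ fun _ => rfl

lemma Fin.ncard_setOf_val (N : ℕ) (p : ℕ → Prop) [DecidablePred p] :
    {k : Fin N | p k}.ncard = Nat.count p N := by
  rw [Nat.count_eq_card_filter_range, Set.ncard_eq_toFinset_card', Set.toFinset_ofPred,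
    ← Finset.card_map Fin.valEmbedding]
  congr 1
  ext x
  simp only [Finset.mem_map, Finset.mem_filter, Finset.mem_univ, true_and, Fin.valEmbedding_apply,
    Finset.mem_range]
  exact ⟨fun ⟨a, ha, hx⟩ => hx ▸ ⟨a.2, ha⟩, fun ⟨hx, hp⟩ => ⟨⟨x, hx⟩, hp, rfl⟩⟩

lemma Fin.ncard_setOf_val_not_modEq_one_three (N : ℕ) :
    {k : Fin N | ¬(k : ℕ) ≡ 1 [MOD 3]}.ncard = N - (N + 1) / 3 := by
  have hcount := Nat.count_modEq_card N (r := 3) (by norm_num) 1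
  rw [← Fin.ncard_setOf_val] at hcount
  rw [← Set.compl_ofPred, Set.ncard_compl, Nat.card_eq_fintype_card, Fintype.card_fin, hcount]
  split_ifs <;> omega

namespace wheelGraph

variable {m : ℕ}

lemma add_one_ne_self (k : Fin (m + 3)) : k + 1 ≠ k := by
  simp

@[simp] lemma add_one_add_one_ne_self (k : Fin (m + 3)) : k + 1 + 1 ≠ k := by
  simp [add_assoc, Fin.ext_iff, Fin.val_add, Nat.mod_eq_of_lt (show 2 < m + 3 by omega)]

def spoke (k : Fin (m + 3)) : (wheelGraph (m + 3)).edgeSet :=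
  ⟨s(none, some k), trivial⟩

def rim (k : Fin (m + 3)) : (wheelGraph (m + 3)).edgeSet :=
  ⟨s(some k, some (k + 1)), show (cycleGraph (m + 1 + 2)).Adj k (k + 1) by simp [cycleGraph_adj]⟩

@[simp] lemma coe_spoke (k : Fin (m + 3)) : (spoke k : Sym2 _) = s(none, some k) := rfl

@[simp] lemma coe_rim (k : Fin (m + 3)) : (rim k : Sym2 _) = s(some k, some (k + 1)) := rfl

@[simp] lemma spoke_inj {j k : Fin (m + 3)} : spoke j = spoke k ↔ j = k := by
  simp [Subtype.ext_iff]

@[simp] lemma rim_inj {j k : Fin (m + 3)} : rim j = rim k ↔ j = k := by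
  refine ⟨fun h => ?_, fun h => h ▸ rfl⟩
  replace h := congrArg Subtype.val h
  simp only [coe_rim, Sym2.eq_iff, Option.some.injEq] at h
  rcases h with ⟨h, -⟩ | ⟨rfl, h⟩
  · exact h
  · exact absurd h (add_one_add_one_ne_self k)

@[simp] lemma spoke_ne_rim (j k : Fin (m + 3)) : spoke j ≠ rim k := by
  simp [Subtype.ext_iff]

@[simp] lemma rim_ne_spoke (j k : Fin (m + 3)) : rim j ≠ spoke k := (spoke_ne_rim k j).symm

lemma edge_cases (e : (wheelGraph (m + 3)).edgeSet) : (∃ k, e = spoke k) ∨ ∃ k, e = rim k := by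
  obtain ⟨e, he⟩ := e
  induction e using Sym2.inductionOn with
  | hf a b =>
    match a, b, he with
    | none, some k, _ => exact .inl ⟨k, rfl⟩
    | some k, none, _ => exact .inl ⟨k, Subtype.ext Sym2.eq_swap⟩
    | some a, some b, he =>
      replace he : (cycleGraph (m + 1 + 2)).Adj a b := he
      rw [cycleGraph_adj] at he
      rcases he with h | h
      · exact .inr ⟨b, Subtype.ext (by simp [← h])⟩
      · exact .inr ⟨a, Subtype.ext (by simp [← h])⟩

end wheelGraph

/-- `middleWheel m` is `M(W_{m+4})`: its rim is a cycle on `m + 3` vertices. -/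
abbrev middleWheel (m : ℕ) : SimpleGraph (Option (Fin (m + 3)) ⊕ (wheelGraph (m + 3)).edgeSet) :=
  middleGraph (wheelGraph (m + 3))

namespace middleWheel

open wheelGraph Fin.CommRing

variable {m : ℕ}

abbrev Vert (m : ℕ) : Type := Option (Fin (m + 3)) ⊕ (wheelGraph (m + 3)).edgeSet

def hub : Vert m := .inl none

def rimVertex (k : Fin (m + 3)) : Vert m := .inl (some k)

def spokeEdge (k : Fin (m + 3)) : Vert m := .inr (spoke k)

def rimEdge (k : Fin (m + 3)) : Vert m := .inr (rim k)

def ofParam : Option (Fin (m + 3)) ⊕ Fin (m + 3) ⊕ Fin (m + 3) → Vert m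
  | .inl v => .inl v
  | .inr (.inl k) => spokeEdge k
  | .inr (.inr k) => rimEdge k

lemma ofParam_injective : (ofParam (m := m)).Injective := by
  rintro (a | a | a) (b | b | b) h <;> simp_all [ofParam, spokeEdge, rimEdge]

lemma ofParam_surjective : (ofParam (m := m)).Surjective := by
  rintro (v | e)
  · exact ⟨.inl v, rfl⟩
  · rcases edge_cases e with ⟨k, rfl⟩ | ⟨k, rfl⟩
    exacts [⟨.inr (.inl k), rfl⟩, ⟨.inr (.inr k), rfl⟩]

lemma adj_hub {x : Vert m} : (middleWheel m).Adj hub x ↔ ∃ k, x = spokeEdge k := by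
  obtain ⟨(_ | j) | j | j, rfl⟩ := ofParam_surjective x <;>
    simp [ofParam, hub, spokeEdge, rimEdge]

lemma adj_rimVertex {k : Fin (m + 3)} {x : Vert m} :
    (middleWheel m).Adj (rimVertex k) x ↔ x = spokeEdge k ∨ x = rimEdge k ∨ x = rimEdge (k - 1) := by
  obtain ⟨(_ | j) | j | j, rfl⟩ := ofParam_surjective x <;>
    simp [ofParam, rimVertex, spokeEdge, rimEdge, eq_comm, eq_sub_iff_add_eq]

lemma adj_spokeEdge {j : Fin (m + 3)} {x : Vert m} :
    (middleWheel m).Adj (spokeEdge j) x ↔ x = hub ∨ x = rimVertex j ∨ (∃ k ≠ j, x = spokeEdge k) ∨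
      x = rimEdge j ∨ x = rimEdge (j - 1) := by
  obtain ⟨(_ | k) | k | k, rfl⟩ := ofParam_surjective x <;>
    simp [ofParam, hub, rimVertex, spokeEdge, rimEdge, eq_sub_iff_add_eq] <;> grind

lemma adj_rimEdge {k : Fin (m + 3)} {x : Vert m} :
    (middleWheel m).Adj (rimEdge k) x ↔ x = rimVertex k ∨ x = rimVertex (k + 1) ∨
      x = spokeEdge k ∨ x = spokeEdge (k + 1) ∨ x = rimEdge (k - 1) ∨ x = rimEdge (k + 1) := by
  obtain ⟨(_ | j) | j | j, rfl⟩ := ofParam_surjective x <;>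
    simp [ofParam, rimVertex, spokeEdge, rimEdge, eq_sub_iff_add_eq] <;> grind [add_one_ne_self]

section LowerBound

variable (D : Set (Vert m))

lemma indicator_sum_le_ncard :
    D.indicator 1 hub + ∑ k, D.indicator 1 (rimVertex k) + ∑ k, D.indicator 1 (spokeEdge k) +
      ∑ k, D.indicator 1 (rimEdge k) ≤ D.ncard := by
  have := Set.sum_indicator_comp_le_ncard ofParam_injective D.toFinite
  simpa [Fintype.sum_sum_type, ofParam, hub, rimVertex, add_assoc] using this

noncomputable def windowWeight (i : Fin (m + 3)) : ℕ :=
  D.indicator 1 (rimEdge i) + D.indicator 1 (rimEdge (i + 1)) + D.indicator 1 (rimEdge (i + 2)) +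
    D.indicator 1 (spokeEdge (i + 1)) + D.indicator 1 (spokeEdge (i + 2)) +
    D.indicator 1 (rimVertex (i + 1)) + D.indicator 1 (rimVertex (i + 2))

lemma sum_windowWeight :
    ∑ i, windowWeight D i = 3 * ∑ k, D.indicator 1 (rimEdge k) +
      2 * ∑ k, D.indicator 1 (spokeEdge k) + 2 * ∑ k, D.indicator 1 (rimVertex k) := by
  simp only [windowWeight, Finset.sum_add_distrib,
    Fintype.sum_comp_add_right (fun k => D.indicator 1 (rimEdge k)),
    Fintype.sum_comp_add_right (fun k => D.indicator 1 (spokeEdge k)),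
    Fintype.sum_comp_add_right (fun k => D.indicator 1 (rimVertex k))]
  ring

variable {D}

lemma exists_spokeEdge_mem (hD : IsTotalDomSet (middleWheel m) D) : ∃ k, spokeEdge k ∈ D := by
  obtain ⟨x, hx, hadj⟩ := hD hub
  obtain ⟨k, rfl⟩ := adj_hub.1 hadj
  exact ⟨k, hx⟩

lemma one_le_indicator_nbhd_rimVertex (hD : IsTotalDomSet (middleWheel m) D) (k : Fin (m + 3)) :
    1 ≤ D.indicator 1 (spokeEdge k) + D.indicator 1 (rimEdge k) +
      D.indicator 1 (rimEdge (k - 1)) := by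
  obtain ⟨x, hx, hadj⟩ := hD (rimVertex k)
  rcases adj_rimVertex.1 hadj with rfl | rfl | rfl <;>
    simp only [Set.indicator_of_mem hx, Pi.one_apply] <;> omega

lemma one_le_indicator_nbhd_rimEdge (hD : IsTotalDomSet (middleWheel m) D) (k : Fin (m + 3)) :
    1 ≤ D.indicator 1 (rimVertex k) + D.indicator 1 (rimVertex (k + 1)) +
      D.indicator 1 (spokeEdge k) + D.indicator 1 (spokeEdge (k + 1)) +
      D.indicator 1 (rimEdge (k - 1)) + D.indicator 1 (rimEdge (k + 1)) := by
  obtain ⟨x, hx, hadj⟩ := hD (rimEdge k)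
  rcases adj_rimEdge.1 hadj with rfl | rfl | rfl | rfl | rfl | rfl <;>
    simp only [Set.indicator_of_mem hx, Pi.one_apply] <;> omega

lemma two_le_windowWeight (hD : IsTotalDomSet (middleWheel m) D) (i : Fin (m + 3)) :
    2 ≤ windowWeight D i := by
  have hv₁ := one_le_indicator_nbhd_rimVertex hD (i + 1)
  have hv₂ := one_le_indicator_nbhd_rimVertex hD (i + 2)
  have he := one_le_indicator_nbhd_rimEdge hD (i + 1)
  rw [add_sub_cancel_right] at hv₁ he
  rw [show i + 2 - 1 = i + 1 by ring] at hv₂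
  rw [show i + 1 + 1 = i + 2 by ring] at he
  have hle : D.indicator 1 (rimEdge (i + 1)) ≤ 1 :=
    Set.indicator_apply_le' (fun _ => le_rfl) fun _ => zero_le_one
  -- if the rim edge `i + 1` is in `D`, `he` adds a second element of the window; otherwise
  -- `hv₁` and `hv₂` find two different ones
  unfold windowWeight
  omega

lemma exists_three_le_windowWeight (hD : IsTotalDomSet (middleWheel m) D) {j : Fin (m + 3)}
    (hj : spokeEdge j ∈ D) (hhub : hub ∉ D) (hvert : ∀ k, rimVertex k ∉ D)
    (hspoke : ∀ k ≠ j, spokeEdge k ∉ D) : ∃ i, 3 ≤ windowWeight D i := by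
  obtain ⟨x, hx, hadj⟩ := hD (spokeEdge j)
  rcases adj_spokeEdge.1 hadj with rfl | rfl | ⟨k, hk, rfl⟩ | rfl | rfl
  · exact absurd hx hhub
  · exact absurd hx (hvert j)
  · exact absurd hx (hspoke k hk)
  · refine ⟨j - 1 - 1, ?_⟩
    have hv := one_le_indicator_nbhd_rimVertex hD (j - 1)
    unfold windowWeight
    rw [sub_add_cancel, show j - 1 - 1 + 2 = j by ring]
    simp only [Set.indicator_of_mem hx, Set.indicator_of_mem hj, Pi.one_apply] at hv ⊢
    omega
  · refine ⟨j - 1, ?_⟩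
    have hv := one_le_indicator_nbhd_rimVertex hD (j + 1)
    rw [add_sub_cancel_right] at hv
    unfold windowWeight
    rw [sub_add_cancel, show j - 1 + 2 = j + 1 by ring]
    simp only [Set.indicator_of_mem hx, Set.indicator_of_mem hj, Pi.one_apply] at hv ⊢
    omega

theorem two_mul_add_two_le_three_mul_ncard (hD : IsTotalDomSet (middleWheel m) D) :
    2 * (m + 3) + 2 ≤ 3 * D.ncard := by
  have hcount := indicator_sum_le_ncard D
  have hwindows : 2 * (m + 3) ≤ ∑ i, windowWeight D i := by
    simpa [mul_comm] using Finset.sum_le_sum fun i (_ : i ∈ Finset.univ) => two_le_windowWeight hD i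
  rw [sum_windowWeight] at hwindows
  obtain ⟨j, hj⟩ := exists_spokeEdge_mem hD
  have hSj : D.indicator 1 (spokeEdge j) ≤ ∑ k, D.indicator 1 (spokeEdge k) :=
    Finset.single_le_sum (f := fun k => D.indicator 1 (spokeEdge k)) (fun _ _ => Nat.zero_le _)
      (Finset.mem_univ j)
  rw [Set.indicator_of_mem hj, Pi.one_apply] at hSj
  by_cases hbig : 2 ≤ ∑ k, D.indicator 1 (spokeEdge k) + ∑ k, D.indicator 1 (rimVertex k) +
      3 * D.indicator 1 hub
  · omega
  have hhub : hub ∉ D := fun h => by simp [Set.indicator_of_mem h] at hbig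
  have hvert : ∀ k, rimVertex k ∉ D := fun k h => by
    have hzero : ∑ k, D.indicator (1 : Vert m → ℕ) (rimVertex k) = 0 := by omega
    simpa [Set.indicator_of_mem h] using Finset.sum_eq_zero_iff.1 hzero k (Finset.mem_univ k)
  have hspoke : ∀ k ≠ j, spokeEdge k ∉ D := fun k hk h => hbig <| by
    have := Finset.sum_le_sum_of_subset
      (f := fun k => D.indicator (1 : Vert m → ℕ) (spokeEdge k)) (Finset.subset_univ {k, j})
    simp only [Finset.sum_pair hk, Set.indicator_of_mem h, Set.indicator_of_mem hj,
      Pi.one_apply] at this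
    omega
  obtain ⟨i, hi⟩ := exists_three_le_windowWeight hD hj hhub hvert hspoke
  have hstrict : 2 * (m + 3) < ∑ i, windowWeight D i := by
    simpa [mul_comm] using Finset.sum_lt_sum
      (fun i (_ : i ∈ Finset.univ) => two_le_windowWeight hD i) ⟨i, Finset.mem_univ i, hi⟩
  rw [sum_windowWeight] at hstrict
  omega

end LowerBound

section UpperBound

def spokeRimSet (j : Fin (m + 3)) (R : Set (Fin (m + 3))) : Set (Vert m) :=
  insert (spokeEdge j) (rimEdge '' R)

variable {j : Fin (m + 3)} {R : Set (Fin (m + 3))}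

@[simp] lemma hub_notMem_spokeRimSet : hub ∉ spokeRimSet j R := by
  simp [spokeRimSet, hub, spokeEdge, rimEdge]

@[simp] lemma rimVertex_notMem_spokeRimSet (k : Fin (m + 3)) : rimVertex k ∉ spokeRimSet j R := by
  simp [spokeRimSet, rimVertex, spokeEdge, rimEdge]

@[simp] lemma spokeEdge_mem_spokeRimSet {k : Fin (m + 3)} :
    spokeEdge k ∈ spokeRimSet j R ↔ k = j := by
  simp [spokeRimSet, spokeEdge, rimEdge]

@[simp] lemma rimEdge_mem_spokeRimSet {k : Fin (m + 3)} :
    rimEdge k ∈ spokeRimSet j R ↔ k ∈ R := by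
  simp [spokeRimSet, spokeEdge, rimEdge]

lemma ncard_spokeRimSet : (spokeRimSet j R).ncard = R.ncard + 1 := by
  rw [spokeRimSet, Set.ncard_insert_of_notMem, Set.ncard_image_of_injective]
  · intro a b h
    simpa [rimEdge] using h
  · simp [spokeEdge, rimEdge]

lemma isTotalDomSet_spokeRimSet (hprev : j - 1 ∈ R) (hvert : ∀ k ≠ j, k ∈ R ∨ k - 1 ∈ R)
    (hrim : ∀ k ≠ j, k ≠ j - 1 → k + 1 ∈ R ∨ k - 1 ∈ R) :
    IsTotalDomSet (middleWheel m) (spokeRimSet j R) := by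
  intro x
  obtain ⟨(_ | k) | k | k, rfl⟩ := ofParam_surjective x
  · exact ⟨spokeEdge j, by simp, adj_hub.2 ⟨j, rfl⟩⟩
  · by_cases hk : k = j
    · exact ⟨spokeEdge k, by simp [hk], adj_rimVertex.2 (.inl rfl)⟩
    · rcases hvert k hk with h | h
      · exact ⟨rimEdge k, by simpa using h, adj_rimVertex.2 (.inr (.inl rfl))⟩
      · exact ⟨rimEdge (k - 1), by simpa using h, adj_rimVertex.2 (.inr (.inr rfl))⟩
  · by_cases hk : k = j
    · exact ⟨rimEdge (k - 1), by simpa [hk] using hprev, adj_spokeEdge.2 (by simp)⟩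
    · exact ⟨spokeEdge j, by simp, adj_spokeEdge.2 (.inr (.inr (.inl ⟨j, Ne.symm hk, rfl⟩)))⟩
  · by_cases hk : k = j
    · exact ⟨spokeEdge k, by simp [hk], adj_rimEdge.2 (by simp)⟩
    by_cases hk' : k = j - 1
    · exact ⟨spokeEdge (k + 1), by simp [hk'], adj_rimEdge.2 (by simp)⟩
    rcases hrim k hk hk' with h | h
    · exact ⟨rimEdge (k + 1), by simpa using h, adj_rimEdge.2 (by simp)⟩
    · exact ⟨rimEdge (k - 1), by simpa using h, adj_rimEdge.2 (by simp)⟩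

lemma connected_induce_compl_spokeRimSet (hj : j ∉ R) :
    ((middleWheel m).induce (spokeRimSet j R)ᶜ).Connected := by
  set S := spokeRimSet j R
  have hhub : hub ∈ Sᶜ := hub_notMem_spokeRimSet
  have step {a b : Vert m} (ha : a ∈ Sᶜ) (hb : b ∈ Sᶜ) (h : (middleWheel m).Adj a b) :
      ((middleWheel m).induce Sᶜ).Reachable ⟨a, ha⟩ ⟨b, hb⟩ :=
    (induce_adj.2 h).reachable
  have reach_spokeEdge {k : Fin (m + 3)} (hk : k ≠ j) :
      ((middleWheel m).induce Sᶜ).Reachable ⟨hub, hhub⟩ ⟨spokeEdge k, by simpa [S] using hk⟩ :=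
    step _ _ (adj_hub.2 ⟨k, rfl⟩)
  have reach_rimEdge {k : Fin (m + 3)} (hk : k ∉ R) :
      ((middleWheel m).induce Sᶜ).Reachable ⟨hub, hhub⟩ ⟨rimEdge k, by simpa [S] using hk⟩ := by
    obtain ⟨l, hl, hadj⟩ : ∃ l ≠ j, (middleWheel m).Adj (spokeEdge l) (rimEdge k) := by
      by_cases hkj : k = j
      · exact ⟨k + 1, hkj ▸ add_one_ne_self k, adj_spokeEdge.2 (by simp)⟩
      · exact ⟨k, hkj, adj_spokeEdge.2 (by simp)⟩
    exact (reach_spokeEdge hl).trans (step _ _ hadj)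
  refine (connected_iff_exists_forall_reachable _).2 ⟨⟨hub, hhub⟩, ?_⟩
  rintro ⟨x, hx⟩
  obtain ⟨(_ | k) | k | k, rfl⟩ := ofParam_surjective x
  · rfl
  · by_cases hk : k = j
    · subst hk
      exact (reach_rimEdge hj).trans (step _ _ (adj_rimEdge.2 (.inl rfl)))
    · exact (reach_spokeEdge hk).trans (step _ _ (adj_spokeEdge.2 (.inr (.inl rfl))))
  · exact reach_spokeEdge (by simpa [S, ofParam] using hx)
  · exact reach_rimEdge (by simpa [S, ofParam] using hx)

theorem exists_isTOCDomSet_ncard_eq :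
    ∃ D, IsTOCDomSet (middleWheel m) D ∧ D.ncard = (2 * (m + 4) + 2) / 3 := by
  set R : Set (Fin (m + 3)) := {k | ¬(k : ℕ) ≡ 1 [MOD 3]}
  have hzero : (0 : Fin (m + 3)) ∈ R := by simp [R, Nat.ModEq]
  have hone : (1 : Fin (m + 3)) ∉ R := by simp [R, Nat.ModEq]
  have hvert (k : Fin (m + 3)) : k ∈ R ∨ k - 1 ∈ R := by
    rcases eq_or_ne k 0 with rfl | hk
    · exact .inl hzero
    · simp only [R, Set.mem_ofPred_eq, Nat.ModEq, Fin.val_sub_one_of_ne_zero hk]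
      omega
  have hrim (k : Fin (m + 3)) (hk : k ≠ 0) : k + 1 ∈ R ∨ k - 1 ∈ R := by
    by_cases hlast : k = Fin.last _
    · exact .inl (by rw [hlast, Fin.last_add_one]; exact hzero)
    · simp only [R, Set.mem_ofPred_eq, Nat.ModEq, Fin.val_sub_one_of_ne_zero hk,
        Fin.val_add_one_of_lt (Fin.lt_last_iff_ne_last.2 hlast)]
      omega
  refine ⟨spokeRimSet 1 R, ⟨?_, connected_induce_compl_spokeRimSet hone⟩, ?_⟩
  · exact isTotalDomSet_spokeRimSet (by simpa using hzero) (fun k _ => hvert k)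
      fun k _ hk => hrim k (by simpa using hk)
  · rw [ncard_spokeRimSet, Fin.ncard_setOf_val_not_modEq_one_three]
    omega

end UpperBound

theorem tocDomNum_eq : tocDomNum (middleWheel m) = (2 * (m + 4) + 2) / 3 := by
  obtain ⟨D, hD, hcard⟩ := exists_isTOCDomSet_ncard_eq (m := m)
  refine tocDomNum_eq_of_isTOCDomSet hD hcard fun D' hD' => ?_
  have := two_mul_add_two_le_three_mul_ncard hD'.1
  omega

end middleWheel

theorem stmt3 (n : ℕ) (hn : 5 ≤ n) :
    tocDomNum (middleGraph (wheelGraph (n - 1))) = (2 * n + 2) / 3 := by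
  obtain ⟨m, rfl⟩ : ∃ m, n = m + 4 := ⟨n - 4, by omega⟩
  exact middleWheel.tocDomNum_eq
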